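/- Uhlmann-type correspondence for sub-normalized states: for sub-normalized states ρ₁, ρ₂ on A with purifications ρ₁^{AR₁}, ρ₂^{AR₂} (with dim R₁ ≤ dim R₂), there exists a partial isometry V : R₁ → R₂ such that P(ρ₁^A, ρ₂^A) = P((I_A ⊗ V) ρ₁^{AR₁} (I_A ⊗ V)†, ρ₂^{AR₂}). -/

import Mathlib

open Matrix ComplexOrder Kronecker
open scoped Classical

/-- Total positive-semidefinite square root: the PSD square root when the matrix is PSD,
and `0` otherwise. -/

noncomputable def msqrt {n : Type*} [Fintype n] [DecidableEq n] (ρ : Matrix n n ℂ) :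
    Matrix n n ℂ :=
  if h : ρ.PosSemidef then
    (h.1.eigenvectorUnitary : Matrix n n ℂ) *
      diagonal ((↑) ∘ (Real.sqrt ·) ∘ h.1.eigenvalues) * (star h.1.eigenvectorUnitary : Matrix n n ℂ)
  else 0

/-- Trace norm `‖M‖₁ = Tr √(M Mᴴ)`. -/
noncomputable def traceNorm {n : Type*} [Fintype n] [DecidableEq n] (M : Matrix n n ℂ) : ℝ :=
  ((msqrt (M * Mᴴ)).trace).re

/-- Fidelity `F(ρ,σ) = ‖√ρ √σ‖₁`. -/
noncomputable def fidelity {n : Type*} [Fintype n] [DecidableEq n] (ρ σ : Matrix n n ℂ) : ℝ :=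
  traceNorm (msqrt ρ * msqrt σ)

/-- Generalized fidelity `F̄(ρ,σ) = F(ρ,σ) + √((1 - Tr ρ)(1 - Tr σ))`. -/
noncomputable def genFid {n : Type*} [Fintype n] [DecidableEq n] (ρ σ : Matrix n n ℂ) : ℝ :=
  fidelity ρ σ + Real.sqrt ((1 - ρ.trace.re) * (1 - σ.trace.re))

/-- Purified distance `P(ρ,σ) = √(1 - F̄(ρ,σ)²)`. -/
noncomputable def pdist {n : Type*} [Fintype n] [DecidableEq n] (ρ σ : Matrix n n ℂ) : ℝ :=
  Real.sqrt (1 - (genFid ρ σ) ^ 2)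

/-- Marginal on `A` of an operator on `A ⊗ R` (partial trace over `R`). -/
noncomputable def margFst {a r : Type*} [Fintype a] [Fintype r]
    (ρ : Matrix (a × r) (a × r) ℂ) : Matrix a a ℂ :=
  Matrix.of fun i j => ∑ l : r, ρ (i, l) (j, l)

/-!
Write the purifications as vectorised matrices, `vᵢ = vec Xᵢ` with `Xᵢ` an `Rᵢ × A` matrix. Then
the marginals are `ρᵢ = (Xᵢᴴ Xᵢ)ᵀ`, the fidelity of the marginals is `Tr |C|` for `C = X₂ X₁ᴴ`, and
`(I ⊗ V) v₁ = vec (V X₁)` has overlap `Tr (V X₁ X₂ᴴ) = Tr (V Cᴴ)` with `v₂`. Taking for `V` the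
isometry of the polar decomposition `C = V |C|` (available since `dim R₁ ≤ dim R₂`) makes this
overlap `Tr |C|`, which is the fidelity of the two pure states. As `V` is an isometry, the traces of
the states are unchanged too, so the generalized fidelities, hence the purified distances, agree.
-/

section Msqrt

variable {m n : Type*} [Fintype m] [Fintype n] [DecidableEq m] [DecidableEq n]

open scoped MatrixOrder

theorem msqrt_eq_cfcSqrt {A : Matrix n n ℂ} (hA : A.PosSemidef) : msqrt A = CFC.sqrt A := by
  rw [msqrt, dif_pos hA, CFC.sqrt_eq_cfc, cfc_nnreal_eq_real _ A hA.nonneg, hA.1.cfc_eq]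
  simp [IsHermitian.cfc, Unitary.conjStarAlgAut_apply, Function.comp_def,
    hA.eigenvalues_nonneg]

theorem msqrt_posSemidef {A : Matrix n n ℂ} (hA : A.PosSemidef) : (msqrt A).PosSemidef := by
  rw [msqrt_eq_cfcSqrt hA]
  exact (CFC.sqrt_nonneg A).posSemidef

theorem msqrt_mul_self {A : Matrix n n ℂ} (hA : A.PosSemidef) : msqrt A * msqrt A = A := by
  rw [msqrt_eq_cfcSqrt hA]
  exact CFC.sqrt_mul_sqrt_self A hA.nonneg

theorem msqrt_eq_of_mul_self {A B : Matrix n n ℂ} (hB : B.PosSemidef) (h : B * B = A) :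
    msqrt A = B := by
  have hA : A.PosSemidef := by
    rw [← h]
    nth_rewrite 1 [← hB.isHermitian.eq]
    exact posSemidef_conjTranspose_mul_self B
  rw [msqrt_eq_cfcSqrt hA]
  exact CFC.sqrt_unique h hB.nonneg

theorem msqrt_isometry_mul_mul_conjTranspose {W : Matrix m n ℂ} (hW : Wᴴ * W = 1)
    {A : Matrix n n ℂ} (hA : A.PosSemidef) :
    msqrt (W * A * Wᴴ) = W * msqrt A * Wᴴ := by
  refine msqrt_eq_of_mul_self ((msqrt_posSemidef hA).mul_mul_conjTranspose_same W) ?_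
  calc W * msqrt A * Wᴴ * (W * msqrt A * Wᴴ) = W * (msqrt A * (Wᴴ * W) * msqrt A) * Wᴴ := by
        simp only [Matrix.mul_assoc]
    _ = W * A * Wᴴ := by rw [hW, Matrix.mul_one, msqrt_mul_self hA]

theorem msqrt_transpose {A : Matrix n n ℂ} (hA : A.PosSemidef) : msqrt Aᵀ = (msqrt A)ᵀ :=
  msqrt_eq_of_mul_self (msqrt_posSemidef hA).transpose <| by
    rw [← Matrix.transpose_mul, msqrt_mul_self hA]

end Msqrt

section Polar

variable {m n : Type*} [Fintype m] [Fintype n] [DecidableEq m] [DecidableEq n]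

/-- The columns `G i / √(d i)` with `d i ≠ 0` are orthonormal; `B` consists of columns of an
orthonormal basis of `ℂᵐ` extending them. -/
theorem exists_isometry_mul_diagonal_sqrt (G : Matrix m n ℂ) (d : n → ℝ)
    (hG : Gᴴ * G = diagonal fun i => (d i : ℂ)) (hcard : Fintype.card n ≤ Fintype.card m) :
    ∃ B : Matrix m n ℂ, Bᴴ * B = 1 ∧ G = B * diagonal fun i => (√(d i) : ℂ) := by
  let col : n → EuclideanSpace ℂ m := fun i => WithLp.toLp 2 fun j => G j i
  have inner_col (i i' : n) : inner ℂ (col i) (col i') = (Gᴴ * G) i i' := by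
    simp only [col, EuclideanSpace.inner_toLp_toLp, dotProduct, Matrix.mul_apply,
      conjTranspose_apply, Pi.star_apply, mul_comm]
  have norm_col (i : n) : ‖col i‖ ^ 2 = d i := by
    have := inner_col i i
    rw [inner_self_eq_norm_sq_to_K, hG, diagonal_apply_eq] at this
    exact Complex.ofReal_injective (by push_cast; exact this)
  have sqrt_ne_zero {i : n} (hi : d i ≠ 0) : (√(d i) : ℂ) ≠ 0 := by
    rw [Complex.ofReal_ne_zero, Real.sqrt_ne_zero (norm_col i ▸ sq_nonneg _)]
    exact hi
  obtain ⟨e⟩ : Nonempty (n ↪ m) := Function.Embedding.nonempty_of_card_le hcard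
  let u : m → EuclideanSpace ℂ m := Function.extend e (fun i => (√(d i) : ℂ)⁻¹ • col i) 0
  have u_e (i : n) : u (e i) = (√(d i) : ℂ)⁻¹ • col i := e.injective.extend_apply _ _ _
  have hu : Orthonormal ℂ ((e '' {i | d i ≠ 0}).domRestrict u) := by
    rw [orthonormal_iff_ite]
    rintro ⟨k, hk⟩ ⟨k', hk'⟩
    obtain ⟨i, hi, rfl⟩ := hk
    obtain ⟨i', hi', rfl⟩ := hk'
    simp only [Set.domRestrict_apply, u_e, inner_smul_left, inner_smul_right, inner_col, hG]
    obtain rfl | hii' := eq_or_ne i i'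
    · rw [diagonal_apply_eq, if_pos rfl, ← Complex.ofReal_inv, Complex.conj_ofReal,
        Complex.ofReal_inv, ← mul_assoc, ← mul_inv, ← Complex.ofReal_mul,
        Real.mul_self_sqrt (norm_col i ▸ sq_nonneg _), inv_mul_cancel₀ (mod_cast hi)]
    · rw [if_neg fun h => hii' (e.injective (congrArg Subtype.val h))]
      simp [hii']
  obtain ⟨b, hb⟩ := hu.exists_orthonormalBasis_extension_of_card_eq (by simp)
  refine ⟨Matrix.of fun j i => b (e i) j, ?_, ?_⟩
  · ext i i'
    have := orthonormal_iff_ite.mp b.orthonormal (e i) (e i')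
    simp only [EuclideanSpace.inner_eq_star_dotProduct, dotProduct, e.injective.eq_iff] at this
    simp only [Matrix.mul_apply, conjTranspose_apply, of_apply, one_apply, ← this]
    exact Finset.sum_congr rfl fun _ _ => mul_comm _ _
  · ext j i
    rw [mul_diagonal, of_apply]
    by_cases hi : d i = 0
    · have hcol : col i = 0 := by rw [← norm_eq_zero, ← sq_eq_zero_iff, norm_col, hi]
      have : G j i = 0 := congrArg (fun v : EuclideanSpace ℂ m => v j) hcol
      rw [this, hi, Real.sqrt_zero, Complex.ofReal_zero, mul_zero]
    · rw [hb (e i) ⟨i, hi, rfl⟩, u_e, PiLp.smul_apply, smul_eq_mul, mul_comm, ← mul_assoc,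
        mul_inv_cancel₀ (sqrt_ne_zero hi), one_mul]

theorem exists_isometry_mul_msqrt (A : Matrix m n ℂ) (hcard : Fintype.card n ≤ Fintype.card m) :
    ∃ W : Matrix m n ℂ, Wᴴ * W = 1 ∧ A = W * msqrt (Aᴴ * A) := by
  have hA := posSemidef_conjTranspose_mul_self A
  set U : Matrix n n ℂ := (hA.isHermitian.eigenvectorUnitary : Matrix n n ℂ)
  have hUU : Uᴴ * U = 1 := Unitary.star_mul_self_of_mem hA.isHermitian.eigenvectorUnitary.2
  have hUU' : U * Uᴴ = 1 := Unitary.mul_star_self_of_mem hA.isHermitian.eigenvectorUnitary.2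
  have hdiag : (A * U)ᴴ * (A * U) = diagonal fun i => (hA.isHermitian.eigenvalues i : ℂ) := by
    have := hA.isHermitian.conjStarAlgAut_star_eigenvectorUnitary
    rw [Unitary.conjStarAlgAut_star_apply] at this
    rw [conjTranspose_mul, Matrix.mul_assoc, ← Matrix.mul_assoc Aᴴ, ← Matrix.mul_assoc]
    exact this
  obtain ⟨B, hBB, hB⟩ := exists_isometry_mul_diagonal_sqrt (A * U) _ hdiag hcard
  refine ⟨B * Uᴴ, ?_, ?_⟩
  · rw [conjTranspose_mul, conjTranspose_conjTranspose, Matrix.mul_assoc, ← Matrix.mul_assoc Bᴴ,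
      hBB, Matrix.one_mul, hUU']
  · rw [msqrt, dif_pos hA, star_eq_conjTranspose]
    calc A = A * U * Uᴴ := by rw [Matrix.mul_assoc, hUU', Matrix.mul_one]
      _ = B * Uᴴ * (U * diagonal (fun i => (√(hA.isHermitian.eigenvalues i) : ℂ)) * Uᴴ) := by
        rw [hB]
        simp only [Matrix.mul_assoc]
        rw [← Matrix.mul_assoc Uᴴ U, hUU, Matrix.one_mul]

theorem trace_msqrt_mul_conjTranspose_of_card_le (A : Matrix m n ℂ)
    (hcard : Fintype.card n ≤ Fintype.card m) :
    (msqrt (A * Aᴴ)).trace = (msqrt (Aᴴ * A)).trace := by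
  obtain ⟨W, hW, hA⟩ := exists_isometry_mul_msqrt A hcard
  have hP := posSemidef_conjTranspose_mul_self A
  have hAA : A * Aᴴ = W * (Aᴴ * A) * Wᴴ :=
    calc A * Aᴴ = W * (msqrt (Aᴴ * A) * (msqrt (Aᴴ * A))ᴴ) * Wᴴ := by
          conv_lhs => rw [hA]
          simp only [conjTranspose_mul, Matrix.mul_assoc]
      _ = W * (Aᴴ * A) * Wᴴ := by
          rw [(msqrt_posSemidef hP).isHermitian.eq, msqrt_mul_self hP]
  rw [hAA, msqrt_isometry_mul_mul_conjTranspose hW hP,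
    trace_mul_cycle, hW, Matrix.one_mul]

theorem trace_msqrt_mul_conjTranspose (A : Matrix m n ℂ) :
    (msqrt (A * Aᴴ)).trace = (msqrt (Aᴴ * A)).trace := by
  rcases le_total (Fintype.card n) (Fintype.card m) with hcard | hcard
  · exact trace_msqrt_mul_conjTranspose_of_card_le A hcard
  · simpa using (trace_msqrt_mul_conjTranspose_of_card_le Aᴴ hcard).symm

end Polar

section Fidelity

variable {a p q : Type*} [Fintype a] [Fintype p] [Fintype q] [DecidableEq p] [DecidableEq q]

theorem trace_msqrt_conjTranspose_mul_self_mul_congr {k : Type*} [Fintype k] [DecidableEq k]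
    (Z : Matrix k a ℂ) {X : Matrix a p ℂ} {Y : Matrix a q ℂ} (h : X * Xᴴ = Y * Yᴴ) :
    (msqrt ((Z * X)ᴴ * (Z * X))).trace = (msqrt ((Z * Y)ᴴ * (Z * Y))).trace := by
  rw [← trace_msqrt_mul_conjTranspose, ← trace_msqrt_mul_conjTranspose]
  simp only [conjTranspose_mul, Matrix.mul_assoc]
  rw [← Matrix.mul_assoc X, h, Matrix.mul_assoc Y]

variable [DecidableEq a]

theorem fidelity_mul_conjTranspose (M₁ : Matrix a p ℂ) (M₂ : Matrix a q ℂ) :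
    fidelity (M₁ * M₁ᴴ) (M₂ * M₂ᴴ) = (msqrt ((M₂ᴴ * M₁)ᴴ * (M₂ᴴ * M₁))).trace.re := by
  have hP₁ := posSemidef_self_mul_conjTranspose M₁
  have hP₂ := posSemidef_self_mul_conjTranspose M₂
  set S₁ := msqrt (M₁ * M₁ᴴ)
  set S₂ := msqrt (M₂ * M₂ᴴ)
  have hS₁ : S₁ᴴ = S₁ := (msqrt_posSemidef hP₁).isHermitian.eq
  have hS₂ : S₂ᴴ = S₂ := (msqrt_posSemidef hP₂).isHermitian.eq
  have hS₁S₁ : S₁ * S₁ᴴ = M₁ * M₁ᴴ := by rw [hS₁, msqrt_mul_self hP₁]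
  have hS₂S₂ : S₂ * S₂ᴴ = M₂ * M₂ᴴ := by rw [hS₂, msqrt_mul_self hP₂]
  unfold fidelity traceNorm
  congr 1
  calc (msqrt (S₁ * S₂ * (S₁ * S₂)ᴴ)).trace
      = (msqrt ((S₁ * S₂)ᴴ * (S₁ * S₂))).trace := trace_msqrt_mul_conjTranspose _
    _ = (msqrt ((S₁ * M₂)ᴴ * (S₁ * M₂))).trace :=
        trace_msqrt_conjTranspose_mul_self_mul_congr S₁ hS₂S₂
    _ = (msqrt ((M₂ᴴ * S₁)ᴴ * (M₂ᴴ * S₁))).trace := by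
        rw [← trace_msqrt_mul_conjTranspose, conjTranspose_mul, conjTranspose_mul, hS₁,
          conjTranspose_conjTranspose]
    _ = (msqrt ((M₂ᴴ * M₁)ᴴ * (M₂ᴴ * M₁))).trace :=
        trace_msqrt_conjTranspose_mul_self_mul_congr M₂ᴴ hS₁S₁

theorem fidelity_vecMulVec (x y : a → ℂ) :
    fidelity (vecMulVec x (star x)) (vecMulVec y (star y)) = ‖star y ⬝ᵥ x‖ := by
  have hvec (v : a → ℂ) : vecMulVec v (star v) = replicateCol Unit v * (replicateCol Unit v)ᴴ := by
    rw [vecMulVec_eq Unit, conjTranspose_replicateCol]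
  have hsqrt : msqrt ((of fun _ _ => star y ⬝ᵥ x : Matrix Unit Unit ℂ)ᴴ *
      of fun _ _ => star y ⬝ᵥ x) = diagonal fun _ => (‖star y ⬝ᵥ x‖ : ℂ) := by
    refine msqrt_eq_of_mul_self (posSemidef_diagonal_iff.mpr fun _ => by positivity) ?_
    ext
    simp only [diagonal_apply_eq, Matrix.mul_apply, of_apply,
      conjTranspose_apply, Finset.univ_unique, Finset.sum_singleton]
    rw [← sq, ← Complex.conj_mul']
    rfl
  rw [hvec, hvec, fidelity_mul_conjTranspose, conjTranspose_replicateCol,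
    replicateRow_mul_replicateCol, hsqrt]
  simp

end Fidelity

section Purification

variable {a r : Type*} [Fintype a] [Fintype r]

theorem margFst_vecMulVec_vec (X : Matrix r a ℂ) :
    margFst (vecMulVec (vec X) (star (vec X))) = (Xᴴ * X)ᵀ := by
  ext i j
  simp [margFst, vecMulVec_apply, vec, Matrix.mul_apply, mul_comm]

theorem trace_vecMulVec_vec (X : Matrix r a ℂ) :
    (vecMulVec (vec X) (star (vec X))).trace = (Xᴴ * X).trace := by
  rw [trace_vecMulVec, dotProduct_comm, star_vec_dotProduct_vec]

theorem one_kronecker_mul_vecMulVec_vec [DecidableEq a] {r' : Type*} [Fintype r']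
    (V : Matrix r' r ℂ) (X : Matrix r a ℂ) :
    ((1 : Matrix a a ℂ) ⊗ₖ V) * vecMulVec (vec X) (star (vec X)) * ((1 : Matrix a a ℂ) ⊗ₖ V)ᴴ
      = vecMulVec (vec (V * X)) (star (vec (V * X))) := by
  rw [mul_vecMulVec, vecMulVec_mul, ← star_mulVec, vec_mul_eq_mulVec]

end Purification

theorem exists_isometry_fidelity_eq_norm_dotProduct {a r₁ r₂ : Type*} [Fintype a] [Fintype r₁]
    [Fintype r₂] [DecidableEq a] [DecidableEq r₁] [DecidableEq r₂]
    (X₁ : Matrix r₁ a ℂ) (X₂ : Matrix r₂ a ℂ) (hcard : Fintype.card r₁ ≤ Fintype.card r₂) :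
    ∃ W : Matrix r₂ r₁ ℂ, Wᴴ * W = 1 ∧
      fidelity (X₁ᴴ * X₁)ᵀ (X₂ᴴ * X₂)ᵀ = ‖star (vec X₂) ⬝ᵥ vec (W * X₁)‖ := by
  set C := X₂ * X₁ᴴ
  have hP := msqrt_posSemidef (posSemidef_conjTranspose_mul_self C)
  obtain ⟨W, hW, hpolar⟩ := exists_isometry_mul_msqrt C hcard
  have hfid : fidelity (X₁ᴴ * X₁)ᵀ (X₂ᴴ * X₂)ᵀ = (msqrt (Cᴴ * C)).trace.re := by
    have hgram : (X₂ᵀᴴ * X₁ᵀ)ᴴ * (X₂ᵀᴴ * X₁ᵀ) = (Cᴴ * C)ᵀ := by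
      simp only [C, transpose_mul, conjTranspose_mul, conjTranspose_conjTranspose, Matrix.mul_assoc,
        conjTranspose_transpose_eq_transpose_conjTranspose]
    rw [transpose_mul, transpose_mul, ← conjTranspose_transpose_eq_transpose_conjTranspose,
      ← conjTranspose_transpose_eq_transpose_conjTranspose, fidelity_mul_conjTranspose, hgram,
      msqrt_transpose (posSemidef_conjTranspose_mul_self C), trace_transpose]
  have hoverlap : star (vec X₂) ⬝ᵥ vec (W * X₁) = (msqrt (Cᴴ * C)).trace :=
    calc star (vec X₂) ⬝ᵥ vec (W * X₁) = (W * Cᴴ).trace := by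
          rw [star_vec_dotProduct_vec, trace_mul_comm, conjTranspose_mul,
            conjTranspose_conjTranspose, Matrix.mul_assoc]
      _ = (W * msqrt (Cᴴ * C) * Wᴴ).trace := by
          conv_lhs => rw [hpolar]
          rw [conjTranspose_mul, hP.isHermitian.eq, Matrix.mul_assoc]
      _ = (msqrt (Cᴴ * C)).trace := by rw [trace_mul_cycle, hW, Matrix.one_mul]
  exact ⟨W, hW, by rw [hfid, hoverlap, Complex.re_eq_norm.mpr hP.trace_nonneg]⟩

theorem uhlmann_subnormalized_general {a r₁ r₂ : Type*}
    [Fintype a] [Fintype r₁] [Fintype r₂] [DecidableEq a] [DecidableEq r₁] [DecidableEq r₂]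
    (hdim : Fintype.card r₁ ≤ Fintype.card r₂)
    (ρ1 ρ2 : Matrix a a ℂ)
    (ρ1' : Matrix (a × r₁) (a × r₁) ℂ)
    (hpure1 : ∃ v : a × r₁ → ℂ, ρ1' = Matrix.vecMulVec v (star v))
    (hptr1 : margFst ρ1' = ρ1)
    (ρ2' : Matrix (a × r₂) (a × r₂) ℂ)
    (hpure2 : ∃ v : a × r₂ → ℂ, ρ2' = Matrix.vecMulVec v (star v))
    (hptr2 : margFst ρ2' = ρ2) :
    ∃ V : Matrix r₂ r₁ ℂ, V * Vᴴ * V = V ∧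
      pdist ρ1 ρ2
        = pdist ((((1 : Matrix a a ℂ) ⊗ₖ V) * ρ1') * ((1 : Matrix a a ℂ) ⊗ₖ V)ᴴ) ρ2' := by
  obtain ⟨v₁, rfl⟩ := hpure1
  obtain ⟨v₂, rfl⟩ := hpure2
  obtain ⟨X₁, rfl⟩ := vec_bijective.surjective v₁
  obtain ⟨X₂, rfl⟩ := vec_bijective.surjective v₂
  rw [margFst_vecMulVec_vec] at hptr1 hptr2
  subst hptr1 hptr2
  obtain ⟨W, hW, hfid⟩ := exists_isometry_fidelity_eq_norm_dotProduct X₁ X₂ hdim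
  refine ⟨W, by rw [Matrix.mul_assoc, hW, Matrix.mul_one], ?_⟩
  have htr₁ : ((X₁ᴴ * X₁)ᵀ).trace = (vecMulVec (vec (W * X₁)) (star (vec (W * X₁)))).trace := by
    rw [trace_vecMulVec_vec, trace_transpose, conjTranspose_mul, Matrix.mul_assoc,
      ← Matrix.mul_assoc Wᴴ, hW, Matrix.one_mul]
  have htr₂ : ((X₂ᴴ * X₂)ᵀ).trace = (vecMulVec (vec X₂) (star (vec X₂))).trace := by
    rw [trace_vecMulVec_vec, trace_transpose]
  rw [one_kronecker_mul_vecMulVec_vec, pdist, pdist, genFid, genFid, fidelity_vecMulVec, hfid,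
    htr₁, htr₂]

/-- Uhlmann-type correspondence for sub-normalized states: given purifications
`ρ₁^{AR₁}`, `ρ₂^{AR₂}` of `ρ₁`, `ρ₂` with `dim R₁ ≤ dim R₂`, there exists a partial isometry
`V : R₁ → R₂` with `P(ρ₁, ρ₂) = P((I ⊗ V) ρ₁^{AR₁} (I ⊗ V)†, ρ₂^{AR₂})`. -/
theorem uhlmann_subnormalized {a r₁ r₂ : Type*}
    [Fintype a] [Fintype r₁] [Fintype r₂] [DecidableEq a] [DecidableEq r₁] [DecidableEq r₂]
    (hdim : Fintype.card r₁ ≤ Fintype.card r₂)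
    (ρ1 ρ2 : Matrix a a ℂ)
    (hρ1 : ρ1.PosSemidef) (hρ1t : ρ1.trace.re ≤ 1)
    (hρ2 : ρ2.PosSemidef) (hρ2t : ρ2.trace.re ≤ 1)
    (ρ1' : Matrix (a × r₁) (a × r₁) ℂ)
    (hpure1 : ∃ v : a × r₁ → ℂ, ρ1' = Matrix.vecMulVec v (star v))
    (hptr1 : margFst ρ1' = ρ1)
    (ρ2' : Matrix (a × r₂) (a × r₂) ℂ)
    (hpure2 : ∃ v : a × r₂ → ℂ, ρ2' = Matrix.vecMulVec v (star v))
    (hptr2 : margFst ρ2' = ρ2) :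
    ∃ V : Matrix r₂ r₁ ℂ, V * Vᴴ * V = V ∧
      pdist ρ1 ρ2
        = pdist ((((1 : Matrix a a ℂ) ⊗ₖ V) * ρ1') * ((1 : Matrix a a ℂ) ⊗ₖ V)ᴴ) ρ2' :=
  uhlmann_subnormalized_general hdim ρ1 ρ2 ρ1' hpure1 hptr1 ρ2' hpure2 hptr2
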